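/- arXiv:math/0501147 — 6 statements merged into one kernel-verified Lean document; each statement's English description precedes it below -/
import Mathlib

section
/- The number of (k,m)-ary trees of order n equals C_{k,m}(n) = (1/(mn+1)) * binomial((mn+1)k, n). -/
open Polynomial

inductive PlaneTree : Type where
  | node : List PlaneTree → PlaneTree

namespace PlaneTree

/-- total number of vertices -/
def numVertices : PlaneTree → ℕ
  | node ts => 1 + (ts.attach.map (fun t => numVertices t.1)).sum
decreasing_by simp only [PlaneTree.node.sizeOf_spec]; exact Nat.lt_add_left 1 (List.sizeOf_lt_of_mem t.2)

/-- number of internal vertices (vertices with at least one child) -/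
def numInternal : PlaneTree → ℕ
  | node ts => (if ts.isEmpty then 0 else 1) + (ts.attach.map (fun t => numInternal t.1)).sum
decreasing_by simp only [PlaneTree.node.sizeOf_spec]; exact Nat.lt_add_left 1 (List.sizeOf_lt_of_mem t.2)

/-- product of `g h_v` over all internal vertices `v`, where `h_v` is the number of
internal vertices of the subtree rooted at `v` -/
def internalHookProd {α : Type} [CommMonoid α] (g : ℕ → α) : PlaneTree → α
  | node ts =>
    (if ts.isEmpty then 1 else g (numInternal (node ts))) *
      (ts.attach.map (fun t => internalHookProd g t.1)).prod
decreasing_by simp only [PlaneTree.node.sizeOf_spec]; exact Nat.lt_add_left 1 (List.sizeOf_lt_of_mem t.2)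

/-- product of `g h_v` over all vertices `v`, where `h_v` is the number of
vertices of the subtree rooted at `v` -/
def vertexHookProd {α : Type} [CommMonoid α] (g : ℕ → α) : PlaneTree → α
  | node ts =>
    g (numVertices (node ts)) * (ts.attach.map (fun t => vertexHookProd g t.1)).prod
decreasing_by simp only [PlaneTree.node.sizeOf_spec]; exact Nat.lt_add_left 1 (List.sizeOf_lt_of_mem t.2)

/-- every internal vertex has exactly `a` children -/
def IsFullAry (a : ℕ) : PlaneTree → Prop
  | node ts => (ts.length = 0 ∨ ts.length = a) ∧ ∀ t ∈ ts, IsFullAry a t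

/-- `IsKMAry k m b T`: with the root of `T` viewed as being on a level of parity `b`
(`b = false` meaning even), every vertex on an even level has `k` children and
every vertex on an odd level has `m` or `0` children. -/
def IsKMAry (k m : ℕ) : Bool → PlaneTree → Prop
  | b, node ts =>
    (if b then ts.length = m ∨ ts.length = 0 else ts.length = k) ∧
      ∀ t ∈ ts, IsKMAry k m (!b) t

/-- number of vertices on levels of parity `b`, the root having parity `cur` -/
def parityVertices (b cur : Bool) : PlaneTree → ℕ
  | node ts =>
    (if cur = b then 1 else 0) + (ts.attach.map (fun t => parityVertices b (!cur) t.1)).sum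
termination_by T => sizeOf T
decreasing_by simp only [PlaneTree.node.sizeOf_spec]; exact Nat.lt_add_left 1 (List.sizeOf_lt_of_mem t.2)

/-- number of internal vertices on levels of parity `b`, the root having parity `cur` -/
def parityInternal (b cur : Bool) : PlaneTree → ℕ
  | node ts =>
    (if cur = b ∧ ¬ts.isEmpty then 1 else 0) +
      (ts.attach.map (fun t => parityInternal b (!cur) t.1)).sum
termination_by T => sizeOf T
decreasing_by simp only [PlaneTree.node.sizeOf_spec]; exact Nat.lt_add_left 1 (List.sizeOf_lt_of_mem t.2)

/-- the order of a `(k,m)`-ary tree: the number of internal (crucial) vertices on odd levels -/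
def kmOrder (T : PlaneTree) : ℕ := parityInternal true false T

end PlaneTree

/-!
Deleting the root and contracting every other vertex on an even level into its parent turns a
`(k,m)`-ary tree of order `n` into a forest of `k` full `mk`-ary plane trees with `n` internal
vertices. Such forests are counted by the Raney number `R_{mk,k}(n) = k/(mkn+k) · C(mkn+k, n)`,
which is `C((mn+1)k, n)/(mn+1)`. The Raney recursion is obtained directly on forests mixing
even-rooted and odd-rooted `(k,m)`-ary trees, by decomposing the first tree at its root.
-/

namespace PlaneTree

def oddRootOrder (T : PlaneTree) : ℕ := parityInternal true true T

lemma parityInternal_node (b cur : Bool) (ts : List PlaneTree) :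
    parityInternal b cur (node ts) =
      (if cur = b ∧ ts ≠ [] then 1 else 0) + (ts.map (parityInternal b !cur)).sum := by
  simp [parityInternal]

@[simp] lemma kmOrder_node (ts : List PlaneTree) :
    kmOrder (node ts) = (ts.map oddRootOrder).sum := by
  simp [kmOrder, parityInternal_node]; rfl

@[simp] lemma oddRootOrder_node (ts : List PlaneTree) :
    oddRootOrder (node ts) = (if ts = [] then 0 else 1) + (ts.map kmOrder).sum := by
  simp [oddRootOrder, parityInternal_node]; rfl

variable {k m : ℕ}

@[simp] lemma isKMAry_false_node (ts : List PlaneTree) :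
    IsKMAry k m false (node ts) ↔ ts.length = k ∧ ∀ t ∈ ts, IsKMAry k m true t := by
  simp [IsKMAry]

@[simp] lemma isKMAry_true_node (ts : List PlaneTree) :
    IsKMAry k m true (node ts) ↔
      (ts.length = m ∨ ts = []) ∧ ∀ t ∈ ts, IsKMAry k m false t := by
  simp [IsKMAry]

end PlaneTree

/-- The Raney numbers `R_{p,r}(n) = r/(pn+r) · C(pn+r, n)`, defined through the recursion that
counts forests of `r` full `p`-ary plane trees with `n` internal vertices by the shape of the
first tree. -/
def raney (p : ℕ) : ℕ → ℕ → ℕ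
  | _, 0 => 1
  | 0, _ + 1 => 0
  | r + 1, n + 1 => raney p r (n + 1) + raney p (r + p) n
termination_by r n => (n, r)

namespace raney

variable (p : ℕ)

@[simp] lemma zero_right (r : ℕ) : raney p r 0 = 1 := by cases r <;> rw [raney]

@[simp] lemma zero_succ (n : ℕ) : raney p 0 (n + 1) = 0 := by rw [raney]

lemma succ_succ (r n : ℕ) : raney p (r + 1) (n + 1) = raney p r (n + 1) + raney p (r + p) n := by
  rw [raney]

end raney

lemma choose_raney_step {p r n N : ℕ} (hp : 1 ≤ p) (hN : N = p * (n + 1) + r) :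
    (N + 1) * (r * N.choose (n + 1) + (r + p) * N.choose n) =
      N * ((r + 1) * (N + 1).choose (n + 1)) := by
  obtain ⟨e, rfl⟩ : ∃ e, N = n + e := Nat.exists_eq_add_of_le (by nlinarith)
  have h1 : (n + e).choose (n + 1) * (n + 1) = (n + e).choose n * e := by
    rw [Nat.choose_succ_right_eq, Nat.add_sub_cancel_left]
  have h2 : (n + e + 1) * (n + e).choose n = (n + e + 1).choose (n + 1) * (n + 1) :=
    Nat.add_one_mul_choose_eq (n + e) n
  have key : r * e + (r + p) * (n + 1) = (n + e) * (r + 1) := by nlinarith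
  apply Nat.eq_of_mul_eq_mul_right n.succ_pos
  calc (n + e + 1) * (r * (n + e).choose (n + 1) + (r + p) * (n + e).choose n) * (n + 1)
      = (n + e + 1) *
          (r * ((n + e).choose (n + 1) * (n + 1)) + (r + p) * (n + e).choose n * (n + 1)) := by
        ring
    _ = (n + e + 1) * (n + e).choose n * (r * e + (r + p) * (n + 1)) := by rw [h1]; ring
    _ = (n + e + 1).choose (n + 1) * (n + 1) * ((n + e) * (r + 1)) := by rw [h2, key]
    _ = (n + e) * ((r + 1) * (n + e + 1).choose (n + 1)) * (n + 1) := by ring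

theorem raney_mul_add {p : ℕ} (hp : 1 ≤ p) (n r : ℕ) :
    raney p r n * (p * n + r) = r * (p * n + r).choose n := by
  induction n generalizing r with
  | zero => simp
  | succ n ihn =>
    induction r with
    | zero => simp
    | succ r ihr =>
      set N := p * (n + 1) + r with hN
      have hNpos : 0 < N := by positivity
      have H1 : raney p r (n + 1) * N = r * N.choose (n + 1) := ihr
      have H2 : raney p (r + p) n * N = (r + p) * N.choose n := by
        rw [show N = p * n + (r + p) by ring]; exact ihn (r + p)
      rw [show p * (n + 1) + (r + 1) = N + 1 by ring, raney.succ_succ]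
      apply Nat.eq_of_mul_eq_mul_right hNpos
      calc (raney p r (n + 1) + raney p (r + p) n) * (N + 1) * N
          = (N + 1) * (raney p r (n + 1) * N + raney p (r + p) n * N) := by ring
        _ = N * ((r + 1) * (N + 1).choose (n + 1)) := by rw [H1, H2, choose_raney_step hp hN]
        _ = (r + 1) * (N + 1).choose (n + 1) * N := by ring

theorem raney_mul_mul_add_one {m : ℕ} (hm : 1 ≤ m) (r n : ℕ) :
    raney (m * r) r n * (m * n + 1) = ((m * n + 1) * r).choose n := by
  rcases Nat.eq_zero_or_pos r with rfl | hr
  · cases n <;> simp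
  apply Nat.eq_of_mul_eq_mul_left hr
  calc r * (raney (m * r) r n * (m * n + 1))
      = raney (m * r) r n * (m * r * n + r) := by ring
    _ = r * ((m * n + 1) * r).choose n := by
      rw [raney_mul_add (Nat.mul_pos hm hr), show m * r * n + r = (m * n + 1) * r by ring]

open PlaneTree

/-- Forests of `s` trees rooted on even levels (first component) and `r` trees rooted on odd
levels (second component), of total order `n`. -/
def kmForest (k m s r n : ℕ) : Set (List PlaneTree × List PlaneTree) :=
  {F | F.1.length = s ∧ F.2.length = r ∧ (∀ T ∈ F.1, IsKMAry k m false T) ∧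
    (∀ T ∈ F.2, IsKMAry k m true T) ∧ (F.1.map kmOrder).sum + (F.2.map oddRootOrder).sum = n}

namespace kmForest

variable {k m : ℕ}

lemma succ_left (s r n : ℕ) :
    kmForest k m (s + 1) r n =
      (fun F => (node (F.2.take k) :: F.1, F.2.drop k)) '' kmForest k m s (k + r) n := by
  ext ⟨l, w⟩
  constructor
  · rintro ⟨hl, hw, heven, hodd, horder⟩
    obtain ⟨⟨ts⟩, a, rfl⟩ := List.exists_cons_of_length_eq_add_one hl
    obtain ⟨hts, hts_odd⟩ := (isKMAry_false_node ts).1 (heven _ List.mem_cons_self)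
    refine ⟨(a, ts ++ w), ⟨?_, ?_, ?_, ?_, ?_⟩, ?_⟩
    · simpa using hl
    · simp [hts, hw]
    · exact fun T hT => heven T (List.mem_cons_of_mem _ hT)
    · exact fun T hT => (List.mem_append.1 hT).elim (hts_odd T) (hodd T)
    · simp only [List.map_cons, List.sum_cons, kmOrder_node] at horder
      simp only [List.map_append, List.sum_append]
      omega
    · simp [← hts]
  · rintro ⟨⟨a, w⟩, ⟨ha, hw, heven, hodd, horder⟩, hF⟩
    simp only [Prod.mk.injEq] at hF ha hw heven hodd horder
    obtain ⟨rfl, rfl⟩ := hF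
    rw [← List.take_append_drop k w, List.map_append, List.sum_append] at horder
    refine ⟨by simpa using ha, by simp [hw], ?_, ?_, ?_⟩
    · refine List.forall_mem_cons.2 ⟨(isKMAry_false_node _).2 ⟨?_, ?_⟩, heven⟩
      · exact List.length_take_of_le (by omega)
      · exact fun t ht => hodd t (List.mem_of_mem_take ht)
    · exact fun T hT => hodd T (List.mem_of_mem_drop hT)
    · simp only [List.map_cons, List.sum_cons, kmOrder_node]
      omega

lemma zero_succ_succ (hm : 1 ≤ m) (r n : ℕ) :
    kmForest k m 0 (r + 1) (n + 1) =
      (fun F => (F.1, node [] :: F.2)) '' kmForest k m 0 r (n + 1) ∪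
        (fun F => ([], node F.1 :: F.2)) '' kmForest k m m r n := by
  ext ⟨l, w⟩
  constructor
  · rintro ⟨hl, hw, -, hodd, horder⟩
    obtain rfl := List.length_eq_zero_iff.1 hl
    obtain ⟨⟨ts⟩, b, rfl⟩ := List.exists_cons_of_length_eq_add_one hw
    obtain ⟨hts | rfl, hts_even⟩ := (isKMAry_true_node ts).1 (hodd _ List.mem_cons_self)
    · have hne : ts ≠ [] := List.ne_nil_of_length_pos (by omega)
      simp only [List.map_nil, List.sum_nil, List.map_cons, List.sum_cons, oddRootOrder_node,
        hne, if_false] at horder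
      refine Or.inr ⟨(ts, b), ⟨hts, by simpa using hw, hts_even,
        fun T hT => hodd T (List.mem_cons_of_mem _ hT), by dsimp only; omega⟩, rfl⟩
    · exact Or.inl ⟨([], b), ⟨rfl, by simpa using hw, by simp,
        fun T hT => hodd T (List.mem_cons_of_mem _ hT), by simpa using horder⟩, rfl⟩
  · rintro (⟨⟨a, b⟩, ⟨ha, hb, -, hodd, horder⟩, hF⟩ |
        ⟨⟨a, b⟩, ⟨ha, hb, heven, hodd, horder⟩, hF⟩) <;>
      simp only [Prod.mk.injEq] at hF ha hb hodd horder <;> obtain ⟨rfl, rfl⟩ := hF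
    · obtain rfl := List.length_eq_zero_iff.1 ha
      exact ⟨rfl, by simp [hb], by simp, List.forall_mem_cons.2 ⟨by simp, hodd⟩,
        by simpa using horder⟩
    · have hne : a ≠ [] := List.ne_nil_of_length_pos (by omega)
      refine ⟨rfl, by simp [hb], by simp,
        List.forall_mem_cons.2 ⟨by simpa [ha] using heven, hodd⟩, ?_⟩
      simp only [List.map_nil, List.sum_nil, List.map_cons, List.sum_cons, oddRootOrder_node,
        hne, if_false]
      omega

lemma disjoint_leaf_node (hm : 1 ≤ m) (r n n' : ℕ) :
    Disjoint ((fun F => (F.1, node [] :: F.2)) '' kmForest k m 0 r n')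
      ((fun F => ([], node F.1 :: F.2)) '' kmForest k m m r n) := by
  refine Set.disjoint_left.2 ?_
  rintro _ ⟨F, -, rfl⟩ ⟨G, ⟨hG, -⟩, hGF⟩
  simp only [Prod.mk.injEq, List.cons.injEq, node.injEq] at hGF
  rw [hGF.2.1] at hG
  simp at hG
  omega

lemma zero_zero (r : ℕ) : kmForest k m 0 r 0 = {([], List.replicate r (node []))} := by
  ext ⟨l, w⟩
  simp only [Set.mem_singleton_iff, Prod.mk.injEq]
  constructor
  · rintro ⟨hl, hw, -, -, horder⟩
    refine ⟨List.length_eq_zero_iff.1 hl, List.eq_replicate_iff.2 ⟨hw, ?_⟩⟩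
    rintro ⟨ts⟩ hT
    have h0 : oddRootOrder (node ts) = 0 :=
      List.sum_eq_zero_iff.1 (Nat.eq_zero_of_add_eq_zero_left horder) _ (List.mem_map_of_mem hT)
    cases ts with
    | nil => rfl
    | cons t ts => simp at h0
  · rintro ⟨rfl, rfl⟩
    refine ⟨rfl, by simp, by simp, fun T hT => ?_, ?_⟩
    · simp [List.eq_of_mem_replicate hT]
    · simp [List.map_replicate]

lemma zero_zero_succ (n : ℕ) : kmForest k m 0 0 (n + 1) = ∅ := by
  refine Set.eq_empty_iff_forall_notMem.2 ?_
  rintro ⟨l, w⟩ ⟨hl, hw, -, -, horder⟩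
  simp_all [List.length_eq_zero_iff]

lemma encard_eq_encard_zero_left (s r n : ℕ) :
    (kmForest k m s r n).encard = (kmForest k m 0 (k * s + r) n).encard := by
  induction s generalizing r with
  | zero => simp
  | succ s ih =>
    have hinj : Function.Injective fun F : List PlaneTree × List PlaneTree =>
        (node (F.2.take k) :: F.1, F.2.drop k) := by
      rintro ⟨a, w⟩ ⟨a', w'⟩ h
      simp only [Prod.mk.injEq, List.cons.injEq, node.injEq] at h
      rw [Prod.mk.injEq, ← List.take_append_drop k w, ← List.take_append_drop k w', h.1.1, h.2]
      exact ⟨h.1.2, rfl⟩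
    rw [succ_left, hinj.encard_image, ih, mul_add_one, add_assoc]

theorem encard_zero_left_eq_raney (hm : 1 ≤ m) (n r : ℕ) :
    (kmForest k m 0 r n).encard = raney (m * k) r n := by
  induction n generalizing r with
  | zero => simp [zero_zero]
  | succ n ih =>
    induction r with
    | zero => simp [zero_zero_succ]
    | succ r ihr =>
      have hleaf : Function.Injective fun F : List PlaneTree × List PlaneTree =>
          (F.1, node [] :: F.2) := fun F G h => by simpa [Prod.ext_iff] using h
      have hnode : Function.Injective fun F : List PlaneTree × List PlaneTree =>
          (([] : List PlaneTree), node F.1 :: F.2) := fun F G h => by simpa [Prod.ext_iff] using h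
      rw [zero_succ_succ hm, Set.encard_union_eq (disjoint_leaf_node hm r n (n + 1)),
        hleaf.encard_image, hnode.encard_image, ihr, encard_eq_encard_zero_left, ih,
        raney.succ_succ, mul_comm k m, add_comm (m * k) r, Nat.cast_add]

end kmForest

lemma image_singleton_setOf_isKMAry (k m n : ℕ) :
    (fun T => ([T], [])) '' {T | IsKMAry k m false T ∧ kmOrder T = n} = kmForest k m 1 0 n := by
  ext ⟨l, w⟩
  constructor
  · rintro ⟨T, ⟨hT, hn⟩, hF⟩
    simp only [Prod.mk.injEq] at hF
    obtain ⟨rfl, rfl⟩ := hF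
    exact ⟨rfl, rfl, by simpa using hT, by simp, by simpa using hn⟩
  · rintro ⟨hl, hw, heven, -, horder⟩
    obtain ⟨T, rfl⟩ := List.length_eq_one_iff.1 hl
    obtain rfl := List.length_eq_zero_iff.1 hw
    exact ⟨T, ⟨heven T (by simp), by simpa using horder⟩, rfl⟩

theorem km_ary_tree_count_general (k m : ℕ) (hm : 1 ≤ m) (n : ℕ) :
    Nat.card {T : PlaneTree // PlaneTree.IsKMAry k m false T ∧ PlaneTree.kmOrder T = n}
      * (m * n + 1) = ((m * n + 1) * k).choose n := by
  have hinj : Function.Injective fun T : PlaneTree => ([T], ([] : List PlaneTree)) :=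
    fun T T' h => by simpa using h
  have hencard : {T | IsKMAry k m false T ∧ kmOrder T = n}.encard = raney (m * k) k n := by
    rw [← hinj.encard_image, image_singleton_setOf_isKMAry, kmForest.encard_eq_encard_zero_left,
      kmForest.encard_zero_left_eq_raney hm, mul_one, add_zero]
  have hcard : Nat.card {T // IsKMAry k m false T ∧ kmOrder T = n} = raney (m * k) k n := by
    rw [← ENat.toNat_natCast (raney _ _ _), ← hencard]
    rfl
  rw [hcard, raney_mul_mul_add_one hm]

/-- The number of `(k,m)`-ary trees of order `n` is `C_{k,m}(n) = (1/(mn+1))·binom((mn+1)k, n)`. -/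
theorem km_ary_tree_count (k m : ℕ) (hk : 1 ≤ k) (hm : 1 ≤ m) (n : ℕ) :
    Nat.card {T : PlaneTree // PlaneTree.IsKMAry k m false T ∧ PlaneTree.kmOrder T = n}
      * (m * n + 1) = ((m * n + 1) * k).choose n :=
  km_ary_tree_count_general k m hm n
end

section
/- For every m ≥ 1 and n ≥ 1, the nth hook length polynomial of (m+1)-ary trees satisfies H_{n,m+1}(x) = (1/(mn+1)) * binomial((mn+1)x, n), where binomial((mn+1)x, n) denotes the polynomial ((mn+1)x)((mn+1)x−1)···((mn+1)x−n+1)/n!. -/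
open Polynomial

/-- the polynomial `binomial (a*x, n) = (ax)(ax-1)...(ax-n+1)/n!` -/
noncomputable def binomPoly (a n : ℕ) : Polynomial ℚ :=
  Polynomial.C (1 / (n.factorial : ℚ)) *
    ∏ i ∈ Finset.range n, (Polynomial.C (a : ℚ) * Polynomial.X - Polynomial.C (i : ℚ))

/-- the hook length polynomial of a complete `(m+1)`-ary tree -/
noncomputable def mHookPoly (m : ℕ) (T : PlaneTree) : Polynomial ℚ :=
  PlaneTree.internalHookProd
    (fun h => (Polynomial.C ((m * h + 1 : ℕ) : ℚ) * Polynomial.X + Polynomial.C (1 - (h : ℚ))) *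
      Polynomial.C (1 / (((m + 1) * h : ℕ) : ℚ))) T

/-- the `n`th hook length polynomial of complete `(m+1)`-ary trees -/
noncomputable def H (m n : ℕ) : Polynomial ℚ :=
  ∑ᶠ T : {T : PlaneTree // PlaneTree.IsFullAry (m + 1) T ∧ PlaneTree.numInternal T = n},
    mHookPoly m T.1


/-!
Put `β = m x`. The Gould polynomials `G_n(c) = c / (c + nβ) · binom(c + nβ, n)` satisfy the
Pascal-type recurrence `G_{n+1}(c) = G_{n+1}(c - 1) + G_n(c + β - 1)`, hence the Rothe–Hagen
convolution `∑_{i+j=n} G_i(c) G_j(d) = G_n(c + d)`: by induction on `n`, the defect is a polynomial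
in `d` that is invariant under `d ↦ d - 1` and vanishes at `d = 0`.

Removing the root of a complete `(m+1)`-ary tree with `n + 1` internal vertices leaves `m + 1`
complete `(m+1)`-ary trees with `n` internal vertices in total, and the root contributes the factor
`((m(n+1) + 1)x - n) / ((m+1)(n+1))`. So, by induction on `n`, `H_{n,m+1}(x) = G_n(x)`: the
convolution turns the sum over the subtrees into `G_n((m+1)x)`, and the root factor turns this into
`G_{n+1}(x)`. Finally `G_n(x) = binom((mn+1)x, n) / (mn+1)`.
-/

open Finset

section Gould

variable {A B : Type*} [CommRing A] [Algebra ℚ A] [CommRing B] [Algebra ℚ B]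

noncomputable def gould (c β : A) : ℕ → A
  | 0 => 1
  | n + 1 => ((n + 1).factorial : ℚ)⁻¹ • (c * ∏ i ∈ range n, (c + (n + 1) • β - ((i : A) + 1)))

@[simp]
theorem gould_zero (c β : A) : gould c β 0 = 1 := rfl

theorem map_gould (φ : A →ₐ[ℚ] B) (c β : A) (n : ℕ) :
    φ (gould c β n) = gould (φ c) (φ β) n := by
  cases n <;> simp [gould, map_prod]

theorem gould_zero_left (β : A) (n : ℕ) : gould 0 β (n + 1) = 0 := by
  simp [gould]

theorem gould_rat_succ (c β : ℚ) (n : ℕ) :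
    gould c β (n + 1) = c * (∏ i ∈ range n, (c + (n + 1) * β - (i + 1))) / (n + 1).factorial := by
  simp [gould, div_eq_inv_mul, mul_comm, mul_left_comm]

theorem gould_pascal (c β : ℚ) (n : ℕ) :
    gould c β (n + 1) = gould (c - 1) β (n + 1) + gould (c + β - 1) β n := by
  rcases n with _ | n
  · simp [gould]
  rw [gould_rat_succ, gould_rat_succ, gould_rat_succ, prod_range_succ', prod_range_succ]
  have hQ : ∀ i ∈ range n,
      c + (↑(n + 1) + 1) * β - (↑(i + 1) + 1) = c + β - 1 + (n + 1) * β - (i + 1) := by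
    intro i _; push_cast; ring
  have hQ' : ∀ i ∈ range n,
      c - 1 + (↑(n + 1) + 1) * β - (i + 1) = c + β - 1 + (n + 1) * β - (i + 1) := by
    intro i _; push_cast; ring
  rw [prod_congr rfl hQ, prod_congr rfl hQ', Nat.factorial_succ (n + 1)]
  push_cast
  field_simp
  ring

theorem gould_add_rat (β : ℚ) (n : ℕ) : ∀ c d : ℚ,
    ∑ p ∈ antidiagonal n, gould c β p.1 * gould d β p.2 = gould (c + d) β n := by
  induction n with
  | zero => simp [gould]
  | succ n ih =>
    intro c
    set S : ℚ → ℚ := fun t => ∑ p ∈ antidiagonal (n + 1), gould c β p.1 * gould t β p.2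
    have hS : ∀ t, S t = S (t - 1) + gould (c + t + β - 1) β n := by
      intro t
      simp only [S, Nat.sum_antidiagonal_succ', gould_zero, gould_pascal t β, mul_add,
        sum_add_distrib, ih, show c + (t + β - 1) = c + t + β - 1 by ring]
      ring
    -- the defect `S d - gould (c + d) β (n + 1)` as a polynomial in `d`
    set D : ℚ[X] := ∑ p ∈ antidiagonal (n + 1), C (gould c β p.1) * gould X (C β) p.2 -
      gould (C c + X) (C β) (n + 1)
    have hD : ∀ t, D.eval t = S t - gould (c + t) β (n + 1) := by
      intro t
      simp [D, S, eval_finsetSum, ← coe_aeval_eq_eval, map_gould]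
    have hD_shift : ∀ t, D.eval t = D.eval (t - 1) := by
      intro t
      rw [hD, hD, hS, gould_pascal (c + t), show c + t - 1 = c + (t - 1) by ring]
      ring
    have hD_nat : ∀ j : ℕ, D.eval (j : ℚ) = 0 := by
      intro j
      induction j with
      | zero => simp [hD, S, Nat.sum_antidiagonal_succ', gould_zero_left]
      | succ j ihj => rw [hD_shift]; simpa using ihj
    have hD_zero : D = 0 := eq_zero_of_infinite_isRoot D <|
      Set.infinite_of_injective_forall_mem Nat.cast_injective hD_nat
    intro d
    simpa [hD_zero, sub_eq_zero] using (hD d).symm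

theorem gould_add (c d β : A) (n : ℕ) :
    ∑ p ∈ antidiagonal n, gould c β p.1 * gould d β p.2 = gould (c + d) β n := by
  have universal : ∑ p ∈ antidiagonal n,
      gould (MvPolynomial.X 0 : MvPolynomial (Fin 3) ℚ) (.X 2) p.1 * gould (.X 1) (.X 2) p.2 =
        gould (.X 0 + .X 1) (.X 2) n := by
    refine MvPolynomial.funext fun x => ?_
    change MvPolynomial.aeval x _ = MvPolynomial.aeval x _
    simp only [map_sum, map_mul, map_add, map_gould, MvPolynomial.aeval_X]
    exact gould_add_rat (x 2) n (x 0) (x 1)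
  have := congrArg (MvPolynomial.aeval ![c, d, β]) universal
  simp only [map_sum, map_mul, map_add, map_gould, MvPolynomial.aeval_X] at this
  exact this

theorem sum_piAntidiag_prod_gould {ι : Type*} [DecidableEq ι] (c : ι → A) (β : A)
    (s : Finset ι) (n : ℕ) :
    ∑ f ∈ s.piAntidiag n, ∏ i ∈ s, gould (c i) β (f i) = gould (∑ i ∈ s, c i) β n := by
  induction s using Finset.cons_induction generalizing n with
  | empty => rcases n with _ | n <;> simp [gould_zero_left]
  | cons i s hi ih =>
    rw [piAntidiag_cons, sum_disjiUnion, sum_cons, ← gould_add]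
    refine sum_congr rfl fun p _ => ?_
    rw [sum_map, ← ih, mul_sum]
    refine sum_congr rfl fun f hf => ?_
    have hfi : f i = 0 := by_contra fun h => hi ((mem_piAntidiag.1 hf).2 i h)
    have hs : ∀ j ∈ s, j ≠ i := fun j hj hji => hi (hji ▸ hj)
    simp only [prod_cons, addRightEmbedding_apply, Pi.add_apply, if_pos, hfi, zero_add]
    congr 1
    exact prod_congr rfl fun j hj => by rw [if_neg (hs j hj), add_zero]

end Gould

theorem Finset.le_of_mem_piAntidiag {ι : Type*} [DecidableEq ι] {s : Finset ι} {n : ℕ}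
    {f : ι → ℕ} (hf : f ∈ s.piAntidiag n) (i : ι) : f i ≤ n := by
  rw [mem_piAntidiag] at hf
  by_cases hi : i ∈ s
  · exact hf.1 ▸ single_le_sum (fun _ _ => Nat.zero_le _) hi
  · simp [show f i = 0 from by_contra fun h => hi (hf.2 i h)]

namespace PlaneTree

noncomputable instance : DecidableEq PlaneTree := Classical.decEq _

theorem numInternal_node (ts : List PlaneTree) :
    numInternal (node ts) = (if ts.isEmpty then 0 else 1) + (ts.map numInternal).sum := by
  rw [numInternal, List.attach_map_val]

theorem internalHookProd_node {α : Type} [CommMonoid α] (g : ℕ → α) (ts : List PlaneTree) :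
    internalHookProd g (node ts) =
      (if ts.isEmpty then 1 else g (numInternal (node ts))) *
        (ts.map (internalHookProd g)).prod := by
  rw [internalHookProd, List.attach_map_val]

theorem isFullAry_node {a : ℕ} {ts : List PlaneTree} :
    IsFullAry a (node ts) ↔ (ts.length = 0 ∨ ts.length = a) ∧ ∀ t ∈ ts, IsFullAry a t := by
  rw [IsFullAry]

theorem numInternal_node_eq_zero {ts : List PlaneTree} : numInternal (node ts) = 0 ↔ ts = [] := by
  cases ts <;> simp [numInternal_node]

theorem isFullAry_node_ofFn {a : ℕ} (ts : Fin a → PlaneTree) :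
    IsFullAry a (node (List.ofFn ts)) ↔ ∀ i, IsFullAry a (ts i) := by
  simp [isFullAry_node]

section OfFn

variable {a : ℕ} [NeZero a] (ts : Fin a → PlaneTree)

theorem numInternal_node_ofFn :
    numInternal (node (List.ofFn ts)) = 1 + ∑ i, numInternal (ts i) := by
  simp [numInternal_node, List.sum_ofFn, NeZero.ne a]

theorem internalHookProd_node_ofFn {α : Type} [CommMonoid α] (g : ℕ → α) :
    internalHookProd g (node (List.ofFn ts)) =
      g (numInternal (node (List.ofFn ts))) * ∏ i, internalHookProd g (ts i) := by
  simp [internalHookProd_node, List.prod_ofFn, NeZero.ne a]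

end OfFn

noncomputable def fullTrees (a : ℕ) : ℕ → Finset PlaneTree
  | 0 => {node []}
  | n + 1 => (univ.piAntidiag n).attach.biUnion fun f =>
      (Fintype.piFinset fun i : Fin a => fullTrees a (f.1 i)).image fun ts => node (List.ofFn ts)
decreasing_by exact Nat.lt_succ_of_le (le_of_mem_piAntidiag f.2 i)

theorem mem_fullTrees {a : ℕ} [NeZero a] {n : ℕ} {T : PlaneTree} :
    T ∈ fullTrees a n ↔ IsFullAry a T ∧ numInternal T = n := by
  induction n using Nat.strong_induction_on generalizing T with
  | _ n ih =>
  obtain ⟨ts⟩ := T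
  rcases n with _ | n
  · rw [fullTrees, mem_singleton, numInternal_node_eq_zero]
    constructor
    · rintro ⟨⟩; simp [isFullAry_node]
    · rintro ⟨-, rfl⟩; rfl
  have ih' {f : Fin a → ℕ} (hf : f ∈ univ.piAntidiag n) (i : Fin a) {T : PlaneTree} :
      T ∈ fullTrees a (f i) ↔ IsFullAry a T ∧ numInternal T = f i :=
    ih _ (Nat.lt_succ_of_le (le_of_mem_piAntidiag hf i))
  simp only [fullTrees, mem_biUnion, mem_attach, true_and, mem_image, Fintype.mem_piFinset,
    Subtype.exists, node.injEq]
  constructor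
  · rintro ⟨f, hf, us, hus, rfl⟩
    rw [isFullAry_node_ofFn, numInternal_node_ofFn, ← (mem_piAntidiag.1 hf).1, add_comm]
    exact ⟨fun i => ((ih' hf i).1 (hus i)).1,
      congrArg (· + 1) (sum_congr rfl fun i _ => ((ih' hf i).1 (hus i)).2)⟩
  · rintro ⟨hfull, hnum⟩
    obtain ⟨hlen | hlen, hfull⟩ := isFullAry_node.1 hfull
    · simp [List.length_eq_zero_iff.1 hlen, numInternal_node] at hnum
    obtain ⟨us, rfl⟩ : ∃ us : Fin a → PlaneTree, List.ofFn us = ts :=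
      ⟨_, (List.ofFn_congr hlen ts.get).symm.trans (List.ofFn_get ts)⟩
    rw [numInternal_node_ofFn] at hnum
    have hf : (fun i => numInternal (us i)) ∈ univ.piAntidiag n := by
      simp only [mem_piAntidiag, mem_univ, implies_true, and_true]
      omega
    have hus := (isFullAry_node_ofFn us).1 (isFullAry_node.2 ⟨Or.inr (by simp), hfull⟩)
    exact ⟨_, hf, us, fun i => (ih' hf i).2 ⟨hus i, rfl⟩, rfl⟩

theorem sum_fullTrees_succ {R : Type*} [AddCommMonoid R] {a : ℕ} [NeZero a]
    (F : PlaneTree → R) (n : ℕ) :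
    ∑ T ∈ fullTrees a (n + 1), F T = ∑ f ∈ univ.piAntidiag n,
      ∑ ts ∈ Fintype.piFinset fun i : Fin a => fullTrees a (f i), F (node (List.ofFn ts)) := by
  have node_ofFn_injective : Function.Injective fun ts : Fin a → PlaneTree => node (List.ofFn ts) :=
    fun _ _ h => List.ofFn_injective (node.inj h)
  rw [fullTrees, sum_biUnion, ← sum_attach (univ.piAntidiag n)]
  · exact sum_congr rfl fun f _ => sum_image fun _ _ _ _ h => node_ofFn_injective h
  rintro f - g - hfg
  refine disjoint_left.2 fun T hf hg => hfg ?_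
  simp only [mem_image, Fintype.mem_piFinset] at hf hg
  obtain ⟨us, hus, rfl⟩ := hf
  obtain ⟨vs, hvs, hvu⟩ := hg
  obtain rfl := node_ofFn_injective hvu
  exact Subtype.ext <| funext fun i =>
    (mem_fullTrees.1 (hus i)).2.symm.trans (mem_fullTrees.1 (hvs i)).2

theorem sum_fullTrees_internalHookProd_succ {R : Type} [CommSemiring R] {a : ℕ} [NeZero a]
    (g : ℕ → R) (n : ℕ) :
    ∑ T ∈ fullTrees a (n + 1), internalHookProd g T = g (n + 1) * ∑ f ∈ univ.piAntidiag n,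
      ∏ i : Fin a, ∑ T ∈ fullTrees a (f i), internalHookProd g T := by
  rw [sum_fullTrees_succ, mul_sum]
  refine sum_congr rfl fun f hf => ?_
  rw [prod_univ_sum, mul_sum]
  refine sum_congr rfl fun ts hts => ?_
  have hnum : numInternal (node (List.ofFn ts)) = n + 1 := by
    rw [numInternal_node_ofFn, ← (mem_piAntidiag.1 hf).1, add_comm]
    exact congrArg (· + 1) <|
      sum_congr rfl fun i _ => (mem_fullTrees.1 (Fintype.mem_piFinset.1 hts i)).2
  rw [internalHookProd_node_ofFn, hnum]

end PlaneTree

open PlaneTree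

noncomputable def hookWeight (m h : ℕ) : ℚ[X] :=
  (C ((m * h + 1 : ℕ) : ℚ) * X + C (1 - (h : ℚ))) * C (1 / (((m + 1) * h : ℕ) : ℚ))

theorem hookWeight_mul_gould (m n : ℕ) :
    hookWeight m (n + 1) * gould ((m + 1) • X) (m • X) n = gould (X : ℚ[X]) (m • X) (n + 1) := by
  refine Polynomial.funext fun x => ?_
  simp only [← coe_aeval_eq_eval, map_mul, map_gould, map_nsmul, aeval_X, hookWeight, aeval_C,
    map_add]
  rcases n with _ | n
  · simp [gould]
    field_simp
  rw [gould_rat_succ, gould_rat_succ, prod_range_succ, Nat.factorial_succ (n + 1)]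
  simp only [Algebra.algebraMap_self, RingHom.id_apply, nsmul_eq_mul]
  push_cast
  rw [prod_congr rfl fun (i : ℕ) _ => show (m + 1 : ℚ) * x + (n + 1) * (m * x) - (i + 1) =
    x + (n + 1 + 1) * (m * x) - (i + 1) by ring]
  field_simp
  ring

theorem gould_X_eq_binomPoly (m n : ℕ) :
    gould (X : ℚ[X]) (m • X) n = C (1 / ((m * n + 1 : ℕ) : ℚ)) * binomPoly (m * n + 1) n := by
  refine Polynomial.funext fun x => ?_
  simp only [← coe_aeval_eq_eval, map_mul, map_gould, map_nsmul, aeval_X, binomPoly, aeval_C,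
    map_prod, map_sub]
  rcases n with _ | n
  · simp
  rw [gould_rat_succ, prod_range_succ']
  simp only [Algebra.algebraMap_self, RingHom.id_apply, nsmul_eq_mul]
  push_cast
  rw [prod_congr rfl fun (i : ℕ) _ => show x + (n + 1) * (m * x) - (i + 1 : ℚ) =
    (m * (n + 1) + 1) * x - (i + 1) by ring]
  field_simp
  ring

theorem sum_fullTrees_mHookPoly (m n : ℕ) :
    ∑ T ∈ fullTrees (m + 1) n, mHookPoly m T = gould (X : ℚ[X]) (m • X) n := by
  induction n using Nat.strong_induction_on with
  | _ n ih =>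
  rcases n with _ | n
  · simp [fullTrees, mHookPoly, internalHookProd_node]
  rw [show mHookPoly m = internalHookProd (hookWeight m) from rfl,
    sum_fullTrees_internalHookProd_succ, ← hookWeight_mul_gould]
  congr 1
  rw [show (m + 1) • (X : ℚ[X]) = ∑ _ : Fin (m + 1), X by simp, ← sum_piAntidiag_prod_gould]
  exact sum_congr rfl fun f hf => prod_congr rfl fun i _ =>
    ih _ (Nat.lt_succ_of_le (le_of_mem_piAntidiag hf i))

theorem H_eq_sum_fullTrees (m n : ℕ) : H m n = ∑ T ∈ fullTrees (m + 1) n, mHookPoly m T := by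
  have hset : {T | IsFullAry (m + 1) T ∧ numInternal T = n} = ↑(fullTrees (m + 1) n) :=
    Set.ext fun _ => mem_fullTrees.symm
  rw [H, ← finsum_mem_coe_finset, ← hset, ← finsum_set_coe_eq_finsum_mem]
  rfl

theorem hook_length_poly_mary_general (m n : ℕ) :
    H m n = Polynomial.C (1 / ((m * n + 1 : ℕ) : ℚ)) * binomPoly (m * n + 1) n := by
  rw [H_eq_sum_fullTrees, sum_fullTrees_mHookPoly, gould_X_eq_binomPoly]

/-- `H_{n,m+1}(x) = (1/(mn+1))·binom((mn+1)x, n)`. -/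
theorem hook_length_poly_mary (m n : ℕ) (hm : 1 ≤ m) (hn : 1 ≤ n) :
    H m n = Polynomial.C (1 / ((m * n + 1 : ℕ) : ℚ)) * binomPoly (m * n + 1) n :=
  hook_length_poly_mary_general m n
end

section
/- For integers k, m ≥ 1 and n ≥ 1, the (k,m)-Catalan numbers satisfy C_{k,m}(n) = ((mn+1)k + 1 − n)/((m+1)n) · Σ C_{k,m}(i_1)·C_{k,m}(i_2)···C_{k,m}(i_{m+1}), where the sum runs over all (m+1)-tuples of nonnegative integers summing to n−1. -/
/-!
Write `A_n(p, r) = r/(pn+r) · binom(pn+r, n)`, the coefficients of `B_p(z)^r` for the generalized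
binomial series `B_p`, so that `C_{k,m}(n) = A_n(mk, k)`. The Pascal-type rule
`A_{n+1}(p, r+1) = A_{n+1}(p, r) + A_n(p, p+r)` gives, by induction on `n` and `r`, the
convolution `A(p, r+s) = A(p, r) * A(p, s)`, an extension of Vandermonde's identity. Hence the sum
over `(m+1)`-tuples is `A_{n-1}(mk, (m+1)k)`, and comparing the closed forms of `A_n(p, r)` and
`A_{n-1}(p, p+r)` produces the factor `((mn+1)k+1-n)/((m+1)n)`.
-/

/-- the `(k,m)`-Catalan number `C_{k,m}(n) = (1/(mn+1)) * binomial((mn+1)k, n)` -/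
noncomputable def Ckm (k m n : ℕ) : ℚ := (((m * n + 1) * k).choose n : ℚ) / (m * n + 1)

open Finset

theorem Nat.cast_choose_succ_right_eq {R : Type*} [CommRing R] (n k : ℕ) :
    (n.choose (k + 1) : R) * (k + 1) = n.choose k * (n - k) := by
  have pascal := congrArg (Nat.cast (R := R)) (Nat.choose_succ_succ' n k)
  have absorption := congrArg (Nat.cast (R := R)) (Nat.add_one_mul_choose_eq n k)
  push_cast at pascal absorption
  linear_combination -(k + 1 : R) * pascal - absorption

theorem Finset.Nat.sum_antidiagonalTuple_succ {M : Type*} [AddCommMonoid M] (k n : ℕ)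
    (g : (Fin (k + 1) → ℕ) → M) :
    ∑ f ∈ antidiagonalTuple (k + 1) n, g f =
      ∑ ij ∈ antidiagonal n, ∑ f ∈ antidiagonalTuple k ij.2, g (Fin.cons ij.1 f) := by
  simp only [Finset.sum, antidiagonalTuple, Multiset.Nat.antidiagonalTuple,
    List.Nat.antidiagonalTuple, HasAntidiagonal.antidiagonal, Multiset.Nat.antidiagonal,
    Multiset.map_coe, Multiset.sum_coe, List.flatMap_def, List.map_flatten, List.sum_flatten,
    List.map_map, Function.comp_def]

/-- `rotheHagen p r n` is `A_n(p, r)`; it is set to `1` at `n = 0` because there the formula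
gives `0 / 0 = 0` when `r = 0`. -/
noncomputable def rotheHagen (p r n : ℕ) : ℚ :=
  if n = 0 then 1 else r / (p * n + r : ℕ) * (p * n + r).choose n

namespace rotheHagen

variable (p : ℕ)

@[simp]
theorem zero_right (r : ℕ) : rotheHagen p r 0 = 1 := rfl

theorem succ (r n : ℕ) :
    rotheHagen p r (n + 1) = r / (p * (n + 1) + r : ℕ) * (p * (n + 1) + r).choose (n + 1) :=
  rfl

@[simp]
theorem zero_succ (n : ℕ) : rotheHagen p 0 (n + 1) = 0 := by
  simp [succ]

theorem eq_of_ne_zero {r : ℕ} (hr : r ≠ 0) (n : ℕ) :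
    rotheHagen p r n = r / (p * n + r : ℕ) * (p * n + r).choose n := by
  rcases n with _ | n
  · simp [hr]
  · rfl

theorem cast_mul_succ_add_ne_zero {r : ℕ} (hpr : 0 < p + r) (n : ℕ) :
    ((p * (n + 1) + r : ℕ) : ℚ) ≠ 0 := by
  have := Nat.le_mul_of_pos_right p (by omega : 0 < n + 1)
  exact_mod_cast (by omega : p * (n + 1) + r ≠ 0)

theorem succ_succ (r n : ℕ) :
    rotheHagen p (r + 1) (n + 1) = rotheHagen p r (n + 1) + rotheHagen p (p + r) n := by
  rcases Nat.eq_zero_or_pos (p + r) with hpr | hpr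
  · obtain ⟨rfl, rfl⟩ : p = 0 ∧ r = 0 := by omega
    cases n <;> simp [succ, Nat.choose_eq_zero_of_lt]
  obtain ⟨M, hM⟩ : ∃ M, p * (n + 1) + r = M := ⟨_, rfl⟩
  have hM0 : (M : ℚ) ≠ 0 := hM ▸ cast_mul_succ_add_ne_zero p hpr n
  have hMq : (M : ℚ) = p * (n + 1) + r := by exact_mod_cast hM.symm
  have pascal : ((M + 1).choose (n + 1) : ℚ) = M.choose n + M.choose (n + 1) := by
    exact_mod_cast Nat.choose_succ_succ' M n
  rw [succ, succ, eq_of_ne_zero p hpr.ne', hM, show p * n + (p + r) = M by rw [← hM]; ring,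
    show p * (n + 1) + (r + 1) = M + 1 by omega]
  push_cast
  field_simp
  linear_combination (r + 1 : ℚ) * M * pascal + p * Nat.cast_choose_succ_right_eq (R := ℚ) M n +
    (M.choose n + M.choose (n + 1) : ℚ) * hMq

theorem add_eq (r s n : ℕ) :
    rotheHagen p (r + s) n = ∑ ij ∈ antidiagonal n, rotheHagen p r ij.1 * rotheHagen p s ij.2 := by
  induction n generalizing r with
  | zero => simp
  | succ n ihn =>
    induction r with
    | zero => simp [Nat.sum_antidiagonal_succ]
    | succ r ihr =>
      rw [Nat.sum_antidiagonal_succ] at ihr ⊢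
      rw [show r + 1 + s = r + s + 1 by omega, succ_succ, ihr, ← add_assoc, ihn (p + r)]
      simp only [succ_succ, add_mul, sum_add_distrib, zero_right]
      ring

theorem mul_eq (t r n : ℕ) :
    rotheHagen p (t * r) n = ∑ f ∈ Nat.antidiagonalTuple t n, ∏ j, rotheHagen p r (f j) := by
  induction t generalizing n with
  | zero => cases n <;> simp
  | succ t ih =>
    simp only [Nat.sum_antidiagonalTuple_succ, Fin.prod_univ_succ, Fin.cons_zero, Fin.cons_succ,
      ← mul_sum, ← ih]
    rw [show (t + 1) * r = r + t * r by ring, add_eq]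

theorem mul_succ_eq (r n : ℕ) : ((n : ℚ) + 1) * (p + r) * rotheHagen p r (n + 1) =
    r * (p * (n + 1) + r - n) * rotheHagen p (p + r) n := by
  rcases Nat.eq_zero_or_pos (p + r) with hpr | hpr
  · obtain ⟨rfl, rfl⟩ : p = 0 ∧ r = 0 := by omega
    simp
  obtain ⟨M, hM⟩ : ∃ M, p * (n + 1) + r = M := ⟨_, rfl⟩
  have hM0 : (M : ℚ) ≠ 0 := hM ▸ cast_mul_succ_add_ne_zero p hpr n
  have hMq : (M : ℚ) = p * (n + 1) + r := by exact_mod_cast hM.symm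
  rw [succ, eq_of_ne_zero p hpr.ne', hM, show p * n + (p + r) = M by rw [← hM]; ring, ← hMq]
  push_cast
  field_simp
  linear_combination (r * (p + r) : ℚ) * Nat.cast_choose_succ_right_eq (R := ℚ) M n

end rotheHagen

theorem Ckm_eq_rotheHagen (k m n : ℕ) : Ckm k m n = rotheHagen (m * k) k n := by
  rcases n with _ | n
  · simp [Ckm]
  rcases Nat.eq_zero_or_pos k with rfl | hk
  · simp [Ckm]
  rw [rotheHagen.succ, Ckm, show m * k * (n + 1) + k = (m * (n + 1) + 1) * k by ring]
  push_cast
  field_simp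

theorem km_catalan_recurrence_general (k m n : ℕ) (hk : 1 ≤ k) (hn : 1 ≤ n) :
    Ckm k m n = (((m * n + 1) * k + 1 : ℚ) - n) / ((m + 1) * n) *
      ∑ f ∈ Finset.Nat.antidiagonalTuple (m + 1) (n - 1), ∏ j, Ckm k m (f j) := by
  obtain ⟨n, rfl⟩ : ∃ n', n = n' + 1 := ⟨n - 1, by omega⟩
  have hk0 : (k : ℚ) ≠ 0 := by exact_mod_cast (by omega : k ≠ 0)
  have shift := rotheHagen.mul_succ_eq (m * k) k n
  simp only [Nat.add_sub_cancel, Ckm_eq_rotheHagen, ← rotheHagen.mul_eq]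
  rw [show (m + 1) * k = m * k + k by ring]
  push_cast at shift ⊢
  field_simp
  apply mul_left_cancel₀ hk0
  linear_combination shift

/-- The recurrence
`C_{k,m}(n) = ((mn+1)k+1-n)/((m+1)n) · Σ C_{k,m}(i₁)⋯C_{k,m}(i_{m+1})`, summed over
`(m+1)`-tuples of nonnegative integers summing to `n-1`. -/
theorem km_catalan_recurrence (k m n : ℕ) (hk : 1 ≤ k) (hm : 1 ≤ m) (hn : 1 ≤ n) :
    Ckm k m n = (((m * n + 1) * k + 1 : ℚ) - n) / ((m + 1) * n) *
      ∑ f ∈ Finset.Nat.antidiagonalTuple (m + 1) (n - 1), ∏ j, Ckm k m (f j) :=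
  km_catalan_recurrence_general k m n hk hn
end

section
/- For n ≥ 1, Σ_{T} (n!/2^n) · Π_{v∈I(T)} (1 + 1/h_v) = (n+1)^{n−1}, where the sum is over all complete binary trees T with n internal vertices. -/
/-!
Full binary plane trees are the binary trees `BinaryTree Unit`, so splitting at the root
shows that the sum `Sₙ` of the hook products `∏ (1 + 1/h_v)` over trees with `n` internal
vertices satisfies `Sₙ₊₁ = (1 + 1/(n+1)) ∑_{i+j=n} Sᵢ Sⱼ`. Writing `Sₙ = 2ⁿ/n! · aₙ`, this
becomes `aₙ₊₁ = (n+2)/2 · ∑ C(n,i) aᵢ aⱼ`, which `aₙ = Aₙ(1) = (n+1)^(n-1)` solves by Abel's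
identity: the polynomials `A₀ = 1`, `Aₙ = x (x+n)^(n-1)` are of binomial type,
`Aₙ(x+y) = ∑ C(n,i) Aᵢ(x) Aⱼ(y)`. That identity follows by induction on `n`: for `n ≥ 1`
both sides vanish at `x = 0`, and their `x`-derivatives agree because `Aₙ' = n Aₙ₋₁(x+1)`.
-/

open Polynomial

open Finset

namespace Polynomial

section Abel

variable (R : Type*) [CommRing R]

noncomputable def abelPoly : ℕ → R[X]
  | 0 => 1
  | n + 1 => X * (X + C ((n + 1 : ℕ) : R)) ^ n

variable {R}

@[simp]
lemma abelPoly_zero : abelPoly R 0 = 1 := rfl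

lemma abelPoly_succ (n : ℕ) : abelPoly R (n + 1) = X * (X + C ((n + 1 : ℕ) : R)) ^ n := rfl

lemma eval_zero_abelPoly_succ (n : ℕ) : (abelPoly R (n + 1)).eval 0 = 0 := by
  simp [abelPoly_succ]

lemma derivative_abelPoly_succ (n : ℕ) :
    derivative (abelPoly R (n + 1)) = (n + 1) • (abelPoly R n).comp (X + 1) := by
  cases n with
  | zero => simp [abelPoly_succ]
  | succ n =>
    simp only [abelPoly_succ, derivative_mul, derivative_X, derivative_pow, derivative_add,
      derivative_C, mul_comp, X_comp, pow_comp, add_comp, C_comp, nsmul_eq_mul]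
    simp only [Nat.cast_add, Nat.cast_one, map_add, map_one, map_natCast, add_tsub_cancel_right]
    ring

lemma eval_one_abelPoly (n : ℕ) : (abelPoly R n).eval 1 = ((n + 1 : ℕ) : R) ^ (n - 1) := by
  cases n with
  | zero => simp
  | succ n => simp [abelPoly_succ, add_comm]

lemma add_mul_eval_abelPoly (n : ℕ) (x : R) :
    (x + n) * (abelPoly R n).eval x = x * (x + n) ^ n := by
  cases n with
  | zero => simp
  | succ n => simp only [abelPoly_succ, eval_mul, eval_X, eval_pow, eval_add, eval_C]; ring

variable [IsAddTorsionFree R]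

lemma eq_of_derivative_eq_of_eval_zero_eq {p q : R[X]} (hd : derivative p = derivative q)
    (h0 : p.eval 0 = q.eval 0) : p = q := by
  have hc := eq_C_of_derivative_eq_zero (p := p - q) (by rw [derivative_sub, hd, sub_self])
  rwa [coeff_zero_eq_eval_zero, eval_sub, h0, sub_self, C_0, sub_eq_zero] at hc

theorem abelPoly_comp_X_add_C (n : ℕ) (y : R) :
    (abelPoly R n).comp (X + C y) =
      ∑ ij ∈ antidiagonal n,
        n.choose ij.1 • (abelPoly R ij.1 * C ((abelPoly R ij.2).eval y)) := by
  induction n with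
  | zero => simp
  | succ n ih =>
    apply eq_of_derivative_eq_of_eval_zero_eq
    · calc derivative ((abelPoly R (n + 1)).comp (X + C y))
          = (n + 1) • ((abelPoly R n).comp (X + C y)).comp (X + 1) := by
            simp only [derivative_comp, derivative_abelPoly_succ, derivative_add, derivative_X,
              derivative_C, add_zero, one_mul, smul_comp, comp_assoc, add_comp, X_comp, C_comp,
              one_comp, add_right_comm]
        _ = (n + 1) • ∑ ij ∈ antidiagonal n, n.choose ij.1 •
              ((abelPoly R ij.1).comp (X + 1) * C ((abelPoly R ij.2).eval y)) := by
            simp only [ih, sum_comp, smul_comp, mul_comp, C_comp]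
        _ = _ := by
            rw [Finset.Nat.sum_antidiagonal_succ]
            simp only [derivative_add, derivative_sum, derivative_smul, derivative_mul,
              derivative_C, mul_zero, add_zero, abelPoly_zero, derivative_one, zero_mul, smul_zero,
              zero_add, derivative_abelPoly_succ, smul_sum, smul_mul_assoc, smul_smul]
            refine sum_congr rfl fun ij _ => ?_
            rw [Nat.add_one_mul_choose_eq]
    · simp [Finset.Nat.sum_antidiagonal_succ, eval_finsetSum, eval_zero_abelPoly_succ]

theorem abelPoly_eval_add (n : ℕ) (x y : R) :
    (abelPoly R n).eval (x + y) = ∑ ij ∈ antidiagonal n,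
      (n.choose ij.1 : R) * ((abelPoly R ij.1).eval x * (abelPoly R ij.2).eval y) := by
  simpa [eval_finsetSum, nsmul_eq_mul] using congrArg (eval x) (abelPoly_comp_X_add_C n y)

end Abel

end Polynomial

namespace PlaneTree

@[simp]
lemma numInternal_leaf : numInternal (node []) = 0 := by
  simp [numInternal]

@[simp]
lemma numInternal_binary (l r : PlaneTree) :
    numInternal (node [l, r]) = numInternal l + numInternal r + 1 := by
  rw [numInternal]; simp [List.attach, List.attachWith, add_comm]

@[simp]
lemma internalHookProd_leaf {α : Type} [CommMonoid α] (g : ℕ → α) :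
    internalHookProd g (node []) = 1 := by
  simp [internalHookProd]

@[simp]
lemma internalHookProd_binary {α : Type} [CommMonoid α] (g : ℕ → α) (l r : PlaneTree) :
    internalHookProd g (node [l, r]) =
      g (numInternal l + numInternal r + 1) * (internalHookProd g l * internalHookProd g r) := by
  rw [internalHookProd, ← numInternal_binary]; simp [List.attach, List.attachWith]

@[simp]
lemma isFullAry_leaf (a : ℕ) : IsFullAry a (node []) := by
  simp [IsFullAry]

@[simp]
lemma isFullAry_two_binary (l r : PlaneTree) :
    IsFullAry 2 (node [l, r]) ↔ IsFullAry 2 l ∧ IsFullAry 2 r := by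
  simp [IsFullAry]

end PlaneTree

namespace BinaryTree

def toPlaneTree : BinaryTree Unit → PlaneTree
  | nil => .node []
  | node _ l r => .node [l.toPlaneTree, r.toPlaneTree]

lemma toPlaneTree_injective : Function.Injective toPlaneTree := by
  intro s t hst
  induction s generalizing t with
  | nil => cases t <;> simp_all [toPlaneTree]
  | node _ l r ihl ihr =>
    cases t with
    | nil => simp [toPlaneTree] at hst
    | node _ l' r' =>
      simp only [toPlaneTree, PlaneTree.node.injEq, List.cons.injEq, and_true] at hst
      rw [ihl hst.1, ihr hst.2]

@[simp]
lemma numInternal_toPlaneTree (t : BinaryTree Unit) : t.toPlaneTree.numInternal = t.numNodes := by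
  induction t with
  | nil => simp [toPlaneTree]
  | node _ l r ihl ihr => simp [toPlaneTree, numNodes, ihl, ihr]

lemma isFullAry_toPlaneTree (t : BinaryTree Unit) : t.toPlaneTree.IsFullAry 2 := by
  induction t with
  | nil => simp [toPlaneTree]
  | node _ l r ihl ihr => simp [toPlaneTree, ihl, ihr]

theorem exists_toPlaneTree_eq : ∀ T : PlaneTree, T.IsFullAry 2 → ∃ t, toPlaneTree t = T
  | .node [], _ => ⟨nil, rfl⟩
  | .node [_], h => by simp [PlaneTree.IsFullAry] at h
  | .node [l, r], h => by
    obtain ⟨hl, hr⟩ := (PlaneTree.isFullAry_two_binary l r).1 h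
    obtain ⟨tl, rfl⟩ := exists_toPlaneTree_eq l hl
    obtain ⟨tr, rfl⟩ := exists_toPlaneTree_eq r hr
    exact ⟨node () tl tr, rfl⟩
  | .node (_ :: _ :: _ :: _), h => by simp [PlaneTree.IsFullAry] at h

noncomputable def equivFullBinaryPlaneTree (n : ℕ) :
    treesOfNumNodesEq n ≃ {T : PlaneTree // T.IsFullAry 2 ∧ T.numInternal = n} :=
  Equiv.ofBijective
    (fun t => ⟨t.1.toPlaneTree, isFullAry_toPlaneTree t.1, by
      simpa using mem_treesOfNumNodesEq.mp t.2⟩)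
    ⟨fun s t hst => Subtype.ext (toPlaneTree_injective (congrArg Subtype.val hst)),
      fun ⟨T, hfull, hn⟩ => by
        obtain ⟨t, rfl⟩ := exists_toPlaneTree_eq T hfull
        exact ⟨⟨t, by simpa using hn⟩, rfl⟩⟩

lemma finsum_fullBinaryPlaneTree {M : Type*} [AddCommMonoid M] (n : ℕ) (f : PlaneTree → M) :
    ∑ᶠ T : {T : PlaneTree // T.IsFullAry 2 ∧ T.numInternal = n}, f T.1 =
      ∑ t ∈ treesOfNumNodesEq n, f t.toPlaneTree := by
  rw [← finsum_comp_equiv (equivFullBinaryPlaneTree n), finsum_eq_sum_of_fintype]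
  exact sum_coe_sort (treesOfNumNodesEq n) (fun t => f t.toPlaneTree)

lemma sum_treesOfNumNodesEq_succ {M : Type*} [AddCommMonoid M] (n : ℕ)
    (f : BinaryTree Unit → M) :
    ∑ t ∈ treesOfNumNodesEq (n + 1), f t =
      ∑ ij ∈ antidiagonal n,
        ∑ l ∈ treesOfNumNodesEq ij.1, ∑ r ∈ treesOfNumNodesEq ij.2, f (node () l r) := by
  rw [treesOfNumNodesEq_succ, sum_biUnion]
  · simp only [sum_map, sum_product]
    rfl
  · intro ij _ ij' _ hne
    simp only [Function.onFun, disjoint_left]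
    intro t h1 h2
    simp only [mem_map, mem_product, mem_treesOfNumNodesEq, Prod.exists] at h1 h2
    obtain ⟨l, r, ⟨hl, hr⟩, rfl⟩ := h1
    obtain ⟨l', r', ⟨hl', hr'⟩, h⟩ := h2
    obtain ⟨-, rfl, rfl⟩ := node.inj h
    exact hne (Prod.ext (hl.symm.trans hl') (hr.symm.trans hr'))

def hookProd {M : Type*} [CommMonoid M] (g : ℕ → M) : BinaryTree Unit → M
  | nil => 1
  | node _ l r => g (l.numNodes + r.numNodes + 1) * (l.hookProd g * r.hookProd g)

lemma internalHookProd_toPlaneTree {M : Type} [CommMonoid M] (g : ℕ → M) (t : BinaryTree Unit) :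
    t.toPlaneTree.internalHookProd g = t.hookProd g := by
  induction t with
  | nil => simp [toPlaneTree, hookProd]
  | node _ l r ihl ihr => simp [toPlaneTree, hookProd, ihl, ihr]

section HookSum

variable {R : Type*} [CommSemiring R]

noncomputable def hookSum (g : ℕ → R) (n : ℕ) : R :=
  ∑ t ∈ treesOfNumNodesEq n, t.hookProd g

lemma hookSum_zero (g : ℕ → R) : hookSum g 0 = 1 := by
  simp [hookSum, hookProd]

lemma hookSum_succ (g : ℕ → R) (n : ℕ) :
    hookSum g (n + 1) = g (n + 1) * ∑ ij ∈ antidiagonal n, hookSum g ij.1 * hookSum g ij.2 := by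
  rw [hookSum, sum_treesOfNumNodesEq_succ, mul_sum]
  refine sum_congr rfl fun ij hij => ?_
  rw [hookSum, hookSum, sum_mul_sum, mul_sum]
  refine sum_congr rfl fun l hl => ?_
  rw [mul_sum]
  refine sum_congr rfl fun r hr => ?_
  rw [mem_treesOfNumNodesEq] at hl hr
  rw [HasAntidiagonal.mem_antidiagonal] at hij
  rw [hookProd, hl, hr, hij]

end HookSum

theorem hookSum_one_add_inv {K : Type*} [Field K] [CharZero K] (n : ℕ) :
    hookSum (fun h => 1 + 1 / (h : K)) n = 2 ^ n / n.factorial * (abelPoly K n).eval 1 := by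
  induction n using Nat.strong_induction_on with
  | _ n ih =>
    match n with
    | 0 => simp [hookSum_zero]
    | m + 1 =>
      have hterm : ∀ ij ∈ antidiagonal m,
          hookSum (fun h => 1 + 1 / (h : K)) ij.1 * hookSum (fun h => 1 + 1 / (h : K)) ij.2 =
            2 ^ m / m.factorial *
              (m.choose ij.1 * ((abelPoly K ij.1).eval 1 * (abelPoly K ij.2).eval 1)) := by
        rintro ⟨i, j⟩ hij
        rw [HasAntidiagonal.mem_antidiagonal] at hij
        subst hij
        have hfac : ((i + j).factorial : K) ≠ 0 := Nat.cast_ne_zero.mpr (Nat.factorial_ne_zero _)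
        rw [ih i (by omega), ih j (by omega), Nat.cast_add_choose, pow_add]
        field_simp
      have habel := add_mul_eval_abelPoly (R := K) m 2
      rw [hookSum_succ, sum_congr rfl hterm, ← mul_sum, ← abelPoly_eval_add, one_add_one_eq_two,
        abelPoly_succ]
      simp only [eval_mul, eval_X, eval_pow, eval_add, eval_C, Nat.factorial_succ]
      have hfac : (m.factorial : K) ≠ 0 := Nat.cast_ne_zero.mpr (Nat.factorial_ne_zero _)
      have hm : (m : K) + 1 ≠ 0 := Nat.cast_add_one_ne_zero m
      push_cast at habel ⊢
      field_simp
      linear_combination 2 ^ m * habel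

end BinaryTree

theorem postnikov_identity_general (n : ℕ) :
    (∑ᶠ T : {T : PlaneTree // PlaneTree.IsFullAry 2 T ∧ PlaneTree.numInternal T = n},
        ((n.factorial : ℚ) / 2 ^ n) *
          PlaneTree.internalHookProd (fun h => 1 + 1 / (h : ℚ)) T.1)
      = ((n + 1 : ℕ) : ℚ) ^ (n - 1) := by
  rw [BinaryTree.finsum_fullBinaryPlaneTree n
    (fun T => (n.factorial / 2 ^ n : ℚ) * T.internalHookProd (fun h => 1 + 1 / (h : ℚ)))]
  simp only [BinaryTree.internalHookProd_toPlaneTree]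
  rw [← mul_sum, ← BinaryTree.hookSum, BinaryTree.hookSum_one_add_inv, eval_one_abelPoly]
  field_simp

/-- Postnikov's identity: `Σ_T (n!/2ⁿ) Π_{v∈I(T)} (1 + 1/h_v) = (n+1)ⁿ⁻¹`, summed over all
complete binary trees `T` with `n` internal vertices. -/
theorem postnikov_identity (n : ℕ) (hn : 1 ≤ n) :
    (∑ᶠ T : {T : PlaneTree // PlaneTree.IsFullAry 2 T ∧ PlaneTree.numInternal T = n},
        ((n.factorial : ℚ) / 2 ^ n) *
          PlaneTree.internalHookProd (fun h => 1 + 1 / (h : ℚ)) T.1)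
      = ((n + 1 : ℕ) : ℚ) ^ (n - 1) :=
  postnikov_identity_general n
end

section
/- For n ≥ 0, the nth hook length polynomial of plane forests satisfies H_n(x) = (1/(2n+1)) · binomial((2n+1)x, n) as polynomials in x. -/
open Polynomial

/-- the hook length polynomial of a plane forest (a linearly ordered list of plane trees) -/
noncomputable def forestHookPoly (F : List PlaneTree) : Polynomial ℚ :=
  (F.map (PlaneTree.vertexHookProd
    (fun h => (Polynomial.C ((2 * h - 1 : ℤ) : ℚ) * Polynomial.X + Polynomial.C (1 - (h : ℚ))) *
      Polynomial.C (1 / (h : ℚ))))).prod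

/-- the `n`th hook length polynomial of plane forests -/
noncomputable def Hf (n : ℕ) : Polynomial ℚ :=
  ∑ᶠ F : {F : List PlaneTree // (F.map PlaneTree.numVertices).sum = n}, forestHookPoly F.1

/-!
Removing the root of the first tree of a forest with `n + 1` vertices leaves two forests, with
`j` and `l` vertices where `j + l = n`, so `H_{n+1} = ∑_{j+l=n} g(j+1) H_j H_l`, where
`g(h) = ((2h-1)x + 1 - h)/h` is the hook factor of that root.

The coefficients `A_k(a, b) = a/(a+kb) · binom(a+kb, k)` satisfy the Rothe–Hagen convolution
`∑_{j+l=n} A_j(a, b) A_l(c, b) = A_n(a + c, b)`. With `b = 2x`, `A_n(x, 2x)` is the claimed value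
of `H_n`, and `A_{k+1}(-x, 2x) = -g(k+1) A_k(x, 2x)`; since `A_{n+1}(0, b) = 0`, the convolution at
`a = -x`, `c = x` is exactly the recurrence above.

Rothe–Hagen reduces to Gould's identity
`∑_{j+l=n} A_j(a, b) binom(c + lb, l) = binom(a + c + nb, n)`. By induction on `n`, the
difference of its two sides is a polynomial in `a` that is invariant under `a ↦ a + 1` and
vanishes at `a = 0`, hence vanishes.
-/

open Finset

namespace Ring

variable {R : Type*} [CommRing R] [BinomialRing R]

theorem succ_nsmul_choose_succ (r : R) (k : ℕ) :
    (k + 1) • choose r (k + 1) = r * choose (r - 1) k := by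
  simpa using choose_smul_choose r (Nat.le_add_left 1 k)

theorem succ_nsmul_choose_succ' (r : R) (k : ℕ) :
    (k + 1) • choose r (k + 1) = choose r k * (r - k) := by
  simpa using choose_smul_choose r (Nat.le_succ k)

theorem choose_succ_sub_choose (r : R) (k : ℕ) :
    choose (r + 1) (k + 1) - choose r (k + 1) = choose r k := by
  rw [choose_succ_succ, add_sub_cancel_right]

end Ring

open Ring

section RotheHagen

variable {A B : Type*} [CommRing A] [BinomialRing A] [CommRing B] [BinomialRing B]

/-- `rotheCoeff a b k` is `a / (a + k b) * choose (a + k b) k`, written without division. -/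
def rotheCoeff (a b : A) : ℕ → A
  | 0 => 1
  | k + 1 => choose (a + (k + 1) * b) (k + 1) - b * choose (a + (k + 1) * b - 1) k

@[simp]
theorem rotheCoeff_zero (a b : A) : rotheCoeff a b 0 = 1 := rfl

theorem rotheCoeff_succ (a b : A) (k : ℕ) : rotheCoeff a b (k + 1) =
    choose (a + (k + 1) * b) (k + 1) - b * choose (a - 1 + b + k * b) k := by
  rw [rotheCoeff]
  ring_nf

theorem map_rotheCoeff (f : A →+* B) (a b : A) (k : ℕ) :
    f (rotheCoeff a b k) = rotheCoeff (f a) (f b) k := by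
  cases k <;> simp [rotheCoeff, map_choose]

theorem succ_nsmul_rotheCoeff_succ (a b : A) (k : ℕ) :
    (k + 1) • rotheCoeff a b (k + 1) = a * choose (a + (k + 1) * b - 1) k := by
  rw [rotheCoeff, smul_sub, succ_nsmul_choose_succ, nsmul_eq_mul]
  push_cast
  ring

theorem rotheCoeff_succ_sub_rotheCoeff (a b : A) (k : ℕ) :
    rotheCoeff (a + 1) b (k + 1) - rotheCoeff a b (k + 1) = rotheCoeff (a + b) b k := by
  cases k with
  | zero => simp [rotheCoeff]
  | succ k =>
    have h₁ := choose_succ_sub_choose (a + (k + 2) * b) (k + 1)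
    have h₂ := choose_succ_sub_choose (a + (k + 2) * b - 1) k
    simp only [rotheCoeff]
    push_cast at h₁ h₂ ⊢
    ring_nf at h₁ h₂ ⊢
    linear_combination h₁ - b * h₂

def gouldSum (n : ℕ) (a b c : A) : A :=
  ∑ p ∈ antidiagonal n, rotheCoeff a b p.1 * choose (c + p.2 * b) p.2

theorem map_gouldSum (f : A →+* B) (n : ℕ) (a b c : A) :
    f (gouldSum n a b c) = gouldSum n (f a) (f b) (f c) := by
  simp [gouldSum, map_rotheCoeff, map_choose]

theorem gouldSum_succ_sub_gouldSum (n : ℕ) (a b c : A) :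
    gouldSum (n + 1) (a + 1) b c - gouldSum (n + 1) a b c = gouldSum n (a + b) b c := by
  simp only [gouldSum, Nat.sum_antidiagonal_succ, rotheCoeff_zero, add_sub_add_left_eq_sub,
    ← sum_sub_distrib, ← sub_mul, rotheCoeff_succ_sub_rotheCoeff]

variable [IsAddTorsionFree A]

theorem rotheCoeff_zero_left (b : A) (k : ℕ) : rotheCoeff 0 b (k + 1) = 0 := by
  rw [← nsmul_right_inj k.add_one_ne_zero, succ_nsmul_rotheCoeff_succ, zero_mul, smul_zero]

theorem add_mul_rotheCoeff (a b : A) (k : ℕ) :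
    (a + k * b) * rotheCoeff a b k = a * choose (a + k * b) k := by
  cases k with
  | zero => simp
  | succ k =>
    rw [← nsmul_right_inj k.add_one_ne_zero, ← mul_smul_comm, ← mul_smul_comm,
      succ_nsmul_rotheCoeff_succ, succ_nsmul_choose_succ]
    push_cast
    ring

theorem gouldSum_zero_left (n : ℕ) (b c : A) : gouldSum n 0 b c = choose (c + n * b) n := by
  cases n with
  | zero => simp [gouldSum]
  | succ n => simp [gouldSum, Nat.sum_antidiagonal_succ, rotheCoeff_zero_left]

end RotheHagen

section Domain

variable {A : Type*} [CommRing A] [IsDomain A] [Module ℚ≥0 A]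

theorem gouldSum_eq_choose (n : ℕ) (a b c : A) : gouldSum n a b c = choose (a + c + n * b) n := by
  have := IsAddTorsionFree.of_module_nnrat (M := A)
  have := CharZero.of_isAddTorsionFree A A
  induction n generalizing a with
  | zero => simp [gouldSum]
  | succ n ih =>
    set D : A[X] :=
      gouldSum (n + 1) X (C b) (C c) - choose (X + C c + ((n + 1 : ℕ) : A[X]) * C b) (n + 1)
    have hD (a : A) :
        D.eval a = gouldSum (n + 1) a b c - choose (a + c + (n + 1 : ℕ) * b) (n + 1) := by
      rw [← coe_evalRingHom, map_sub, map_gouldSum, map_choose]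
      simp
    have hstep (a : A) : D.eval (a + 1) = D.eval a := by
      have hpascal := choose_succ_sub_choose (a + c + (n + 1 : ℕ) * b) n
      rw [← sub_eq_zero, hD, hD, sub_sub_sub_comm, gouldSum_succ_sub_gouldSum, ih,
        add_right_comm a 1, add_right_comm _ 1, hpascal, sub_eq_zero]
      congr 1
      push_cast
      ring
    have hnat (k : ℕ) : D.eval (k : A) = 0 := by
      induction k with
      | zero => simp [hD, gouldSum_zero_left, add_comm]
      | succ k hk => rw [Nat.cast_succ, hstep, hk]
    have hD0 : D = 0 := eq_zero_of_infinite_isRoot D <|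
      (Set.infinite_range_of_injective Nat.cast_injective).mono (by rintro _ ⟨k, rfl⟩; exact hnat k)
    simpa [sub_eq_zero, hD0] using (hD a).symm

theorem sum_antidiagonal_rotheCoeff_mul_rotheCoeff (n : ℕ) (a b c : A) :
    ∑ p ∈ antidiagonal n, rotheCoeff a b p.1 * rotheCoeff c b p.2 = rotheCoeff (a + c) b n := by
  cases n with
  | zero => simp
  | succ n =>
    have hsplit : ∑ p ∈ antidiagonal (n + 1), rotheCoeff a b p.1 * rotheCoeff c b p.2 =
        gouldSum (n + 1) a b c - b * gouldSum n a b (c - 1 + b) := by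
      rw [gouldSum, gouldSum, Nat.sum_antidiagonal_succ', Nat.sum_antidiagonal_succ', mul_sum,
        add_sub_assoc, ← sum_sub_distrib]
      congr 1
      · simp
      · refine sum_congr rfl fun p _ => ?_
        rw [rotheCoeff_succ]
        push_cast
        ring
    rw [hsplit, gouldSum_eq_choose, gouldSum_eq_choose, rotheCoeff_succ]
    push_cast
    ring_nf

end Domain

namespace PlaneTree

theorem numVertices_node (ts : List PlaneTree) :
    numVertices (node ts) = (ts.map numVertices).sum + 1 := by
  rw [numVertices, List.attach_map_val, add_comm]

theorem numVertices_pos (T : PlaneTree) : 0 < numVertices T := by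
  cases T
  rw [numVertices_node]
  exact Nat.succ_pos _

theorem vertexHookProd_node {α : Type} [CommMonoid α] (g : ℕ → α) (ts : List PlaneTree) :
    vertexHookProd g (node ts) = g (numVertices (node ts)) * (ts.map (vertexHookProd g)).prod := by
  rw [vertexHookProd, List.attach_map_val]

end PlaneTree

open PlaneTree

noncomputable def hookFactor (h : ℕ) : ℚ[X] :=
  (C ((2 * h - 1 : ℤ) : ℚ) * X + C (1 - (h : ℚ))) * C (1 / (h : ℚ))

theorem forestHookPoly_node_cons (ts F : List PlaneTree) :
    forestHookPoly (node ts :: F) =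
      hookFactor ((ts.map numVertices).sum + 1) * forestHookPoly ts * forestHookPoly F := by
  simp only [forestHookPoly, List.map_cons, List.prod_cons, vertexHookProd_node, numVertices_node,
    hookFactor, mul_assoc]

abbrev PlaneForestOfSize (n : ℕ) : Type := {F : List PlaneTree // (F.map numVertices).sum = n}

theorem eq_nil_of_planeForestOfSize_zero (F : PlaneForestOfSize 0) : F.1 = [] := by
  obtain ⟨_ | ⟨T, F⟩, hF⟩ := F
  · rfl
  · have := numVertices_pos T
    simp at hF
    omega

instance : Subsingleton (PlaneForestOfSize 0) :=
  ⟨fun F G => Subtype.ext ((eq_nil_of_planeForestOfSize_zero F).trans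
    (eq_nil_of_planeForestOfSize_zero G).symm)⟩

def consNode (n : ℕ) :
    (Σ p : antidiagonal n, PlaneForestOfSize p.1.1 × PlaneForestOfSize p.1.2) →
      PlaneForestOfSize (n + 1)
  | ⟨p, ts, F⟩ => ⟨node ts.1 :: F.1, by
      have := HasAntidiagonal.mem_antidiagonal.mp p.2
      rw [List.map_cons, List.sum_cons, numVertices_node, ts.2, F.2]
      omega⟩

theorem consNode_bijective (n : ℕ) : Function.Bijective (consNode n) := by
  constructor
  · rintro ⟨⟨⟨j, l⟩, hp⟩, ⟨ts, hts⟩, ⟨F, hF⟩⟩ ⟨⟨⟨j', l'⟩, hp'⟩, ⟨ts', hts'⟩, ⟨F', hF'⟩⟩ h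
    simp only [consNode, Subtype.mk.injEq, List.cons.injEq, node.injEq] at h
    obtain ⟨rfl, rfl⟩ := h
    dsimp only at hts hF hts' hF'
    subst hts hF hts' hF'
    rfl
  · rintro ⟨_ | ⟨⟨ts⟩, F⟩, hF⟩
    · simp at hF
    · refine ⟨⟨⟨((ts.map numVertices).sum, (F.map numVertices).sum), ?_⟩, ⟨ts, rfl⟩, ⟨F, rfl⟩⟩, rfl⟩
      simp [numVertices_node] at hF
      rw [HasAntidiagonal.mem_antidiagonal]
      omega

instance (n : ℕ) : Finite (PlaneForestOfSize n) := by
  induction n using Nat.strong_induction_on with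
  | _ n ih =>
    cases n with
    | zero => infer_instance
    | succ n =>
      have (p : antidiagonal n) : Finite (PlaneForestOfSize p.1.1 × PlaneForestOfSize p.1.2) := by
        have := HasAntidiagonal.mem_antidiagonal.mp p.2
        have := ih p.1.1 (by omega)
        have := ih p.1.2 (by omega)
        infer_instance
      exact Finite.of_surjective _ (consNode_bijective n).2

noncomputable instance (n : ℕ) : Fintype (PlaneForestOfSize n) := Fintype.ofFinite _

theorem Hf_eq_sum (n : ℕ) : Hf n = ∑ F : PlaneForestOfSize n, forestHookPoly F.1 :=
  finsum_eq_sum_of_fintype _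

theorem Hf_zero : Hf 0 = 1 := by
  rw [Hf_eq_sum, Fintype.sum_subsingleton _ ⟨[], rfl⟩]
  rfl

theorem Hf_succ (n : ℕ) :
    Hf (n + 1) = ∑ p ∈ antidiagonal n, hookFactor (p.1 + 1) * Hf p.1 * Hf p.2 := by
  rw [Hf_eq_sum, ← Fintype.sum_bijective _ (consNode_bijective n) _ _ fun _ => rfl,
    Fintype.sum_sigma, ← sum_coe_sort (antidiagonal n)]
  refine Fintype.sum_congr _ _ fun p => ?_
  rw [Hf_eq_sum, Hf_eq_sum, mul_assoc, sum_mul_sum, ← Fintype.sum_prod_type', mul_sum]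
  refine Fintype.sum_congr _ _ fun ⟨⟨ts, hts⟩, ⟨F, hF⟩⟩ => ?_
  simp only [consNode, forestHookPoly_node_cons, hts, mul_assoc]

theorem binomPoly_eq_choose (a n : ℕ) : binomPoly a n = choose (C (a : ℚ) * X) n := by
  rw [← nsmul_right_inj (Nat.factorial_ne_zero n), ← descPochhammer_eq_factorial_smul_choose,
    ← aeval_eq_smeval, aeval_def, eval₂_eq_eval_map, descPochhammer_map,
    descPochhammer_eval_eq_prod_range, binomPoly, nsmul_eq_mul, ← mul_assoc, ← C_eq_natCast,
    ← C_mul, mul_one_div_cancel (by exact_mod_cast Nat.factorial_ne_zero n), C_1, one_mul]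
  simp

theorem natCast_mul_rotheCoeff_X (n : ℕ) :
    ((2 * n + 1 : ℕ) : ℚ[X]) * rotheCoeff X (2 * X) n =
      choose (((2 * n + 1 : ℕ) : ℚ[X]) * X) n := by
  have h := add_mul_rotheCoeff (X : ℚ[X]) (2 * X) n
  rw [show (X : ℚ[X]) + (n : ℚ[X]) * (2 * X) = ((2 * n + 1 : ℕ) : ℚ[X]) * X by
    push_cast; ring] at h
  refine mul_left_cancel₀ X_ne_zero ?_
  linear_combination h

theorem rotheCoeff_X_eq (n : ℕ) :
    rotheCoeff X (2 * X) n = C (1 / ((2 * n + 1 : ℕ) : ℚ)) * binomPoly (2 * n + 1) n := by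
  rw [binomPoly_eq_choose, C_eq_natCast, ← natCast_mul_rotheCoeff_X, ← mul_assoc, ← C_eq_natCast,
    ← C_mul, one_div_mul_cancel (by positivity), C_1, one_mul]

theorem natCast_mul_hookFactor (k : ℕ) :
    ((k + 1 : ℕ) : ℚ[X]) * hookFactor (k + 1) = ((2 * k + 1 : ℕ) : ℚ[X]) * X - (k : ℚ[X]) := by
  have h : ((k + 1 : ℕ) : ℚ[X]) * C (1 / ((k + 1 : ℕ) : ℚ)) = 1 := by
    rw [← C_eq_natCast, ← C_mul, mul_one_div_cancel (by positivity), C_1]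
  rw [hookFactor]
  push_cast at h ⊢
  simp only [map_sub, map_add, map_mul, map_natCast, map_one, map_ofNat]
  linear_combination ((2 * k + 1 : ℚ[X]) * X - k) * h

theorem rotheCoeff_neg_X_succ (k : ℕ) :
    rotheCoeff (-X) (2 * X) (k + 1) = -(hookFactor (k + 1) * rotheCoeff X (2 * X) k) := by
  -- with `u = (2k+1)X`, both sides times `(k+1)(2k+1)` are `-(k+1) • choose u (k+1)`
  have hR := natCast_mul_rotheCoeff_X k
  have hF := natCast_mul_hookFactor k
  have hA := succ_nsmul_rotheCoeff_succ (-X : ℚ[X]) (2 * X) k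
  have hc := succ_nsmul_choose_succ (((2 * k + 1 : ℕ) : ℚ[X]) * X) k
  have hc' := succ_nsmul_choose_succ' (((2 * k + 1 : ℕ) : ℚ[X]) * X) k
  rw [show -(X : ℚ[X]) + ((k : ℚ[X]) + 1) * (2 * X) - 1 = ((2 * k + 1 : ℕ) : ℚ[X]) * X - 1 by
    push_cast; ring] at hA
  refine mul_left_cancel₀ (Nat.cast_ne_zero.mpr (by positivity) :
    (((k + 1) * (2 * k + 1) : ℕ) : ℚ[X]) ≠ 0) ?_
  simp only [nsmul_eq_mul] at hA hc hc'
  push_cast at *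
  linear_combination (↑k + 1) * hookFactor (k + 1) * hR +
    choose ((2 * (k : ℚ[X]) + 1) * X) k * hF - hc' + hc + (2 * ↑k + 1) * hA

theorem rotheCoeff_X_succ (n : ℕ) :
    rotheCoeff X (2 * X) (n + 1) = ∑ p ∈ antidiagonal n,
      hookFactor (p.1 + 1) * rotheCoeff X (2 * X) p.1 * rotheCoeff X (2 * X) p.2 := by
  have h := sum_antidiagonal_rotheCoeff_mul_rotheCoeff (n + 1) (-X : ℚ[X]) (2 * X) X
  rw [neg_add_cancel, rotheCoeff_zero_left, Nat.sum_antidiagonal_succ] at h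
  simp only [rotheCoeff_zero, one_mul, rotheCoeff_neg_X_succ, neg_mul, sum_neg_distrib] at h
  linear_combination h

/-- `Hₙ(x) = (1/(2n+1))·binom((2n+1)x, n)` for the hook length polynomial of plane forests. -/
theorem hook_length_poly_forests (n : ℕ) :
    Hf n = Polynomial.C (1 / ((2 * n + 1 : ℕ) : ℚ)) * binomPoly (2 * n + 1) n := by
  rw [← rotheCoeff_X_eq]
  induction n using Nat.strong_induction_on with
  | _ n ih =>
    cases n with
    | zero => rw [Hf_zero, rotheCoeff_zero]
    | succ n =>
      rw [Hf_succ, rotheCoeff_X_succ]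
      refine sum_congr rfl fun p hp => ?_
      have := HasAntidiagonal.mem_antidiagonal.mp hp
      rw [ih p.1 (by omega), ih p.2 (by omega)]
end

section
/- The hook length polynomials of plane forests satisfy the recurrence H_n(x) = Σ_{i=1}^n ((2i−1)x − (i−1))/i · H_{i−1}(x) · H_{n−i}(x) for all n ≥ 1. -/
open Polynomial

namespace HookRec
open PlaneTree Polynomial

noncomputable def gp (h : ℕ) : Polynomial ℚ :=
  (Polynomial.C ((2 * h - 1 : ℤ) : ℚ) * Polynomial.X + Polynomial.C (1 - (h : ℚ))) *
    Polynomial.C (1 / (h : ℚ))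

lemma numVertices_node (ts : List PlaneTree) :
    numVertices (node ts) = 1 + (ts.map numVertices).sum := by
  rw [numVertices]; simp

lemma one_le_numVertices (T : PlaneTree) : 1 ≤ numVertices T := by
  obtain ⟨ts⟩ := T; rw [numVertices_node]; omega

lemma forestHookPoly_eq (F : List PlaneTree) :
    forestHookPoly F = (F.map (vertexHookProd gp)).prod := rfl

lemma forestHookPoly_cons (ts F : List PlaneTree) :
    forestHookPoly (node ts :: F) =
      gp (numVertices (node ts)) * forestHookPoly ts * forestHookPoly F := by
  simp only [forestHookPoly_eq, List.map_cons, List.prod_cons]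
  rw [vertexHookProd]
  simp [mul_assoc]

def S (n : ℕ) : Set (List PlaneTree) := {F | (F.map numVertices).sum = n}

lemma Hf_eq (n : ℕ) : Hf n = ∑ᶠ F ∈ S n, forestHookPoly F := by
  rw [Hf]
  exact finsum_subtype_eq_finsum_cond (fun F : List PlaneTree => (F.map PlaneTree.numVertices).sum = n)

def dec (p : List PlaneTree × List PlaneTree) : List PlaneTree := node p.1 :: p.2

lemma dec_inj : Function.Injective dec := by
  intro p q h
  cases p; cases q
  simp only [dec, List.cons.injEq, PlaneTree.node.injEq] at h
  simp [h.1, h.2]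

lemma S_decomp {n : ℕ} (hn : 1 ≤ n) :
    S n = ⋃ i ∈ (Finset.Icc 1 n : Set ℕ), dec '' (S (i - 1) ×ˢ S (n - i)) := by
  ext F
  constructor
  · intro hF
    match F with
    | [] => simp only [S, Set.mem_setOf_eq, List.map_nil, List.sum_nil] at hF; omega
    | node ts :: F' =>
      have h1 : 1 ≤ numVertices (node ts) := one_le_numVertices _
      have hsum : numVertices (node ts) + (F'.map numVertices).sum = n := by
        simpa [S] using hF
      refine Set.mem_biUnion (x := numVertices (node ts)) ?_ ?_
      · simp only [Finset.coe_Icc, Set.mem_Icc]; omega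
      · refine ⟨(ts, F'), ⟨?_, ?_⟩, rfl⟩
        · have := numVertices_node ts
          simp only [S, Set.mem_setOf_eq]; omega
        · simp only [S, Set.mem_setOf_eq]; omega
  · intro hF
    simp only [Set.mem_iUnion, Set.mem_image, Set.mem_prod, Prod.exists,
      Finset.coe_Icc, Set.mem_Icc] at hF
    obtain ⟨i, hi, a, b, ⟨ha, hb⟩, rfl⟩ := hF
    simp only [S, Set.mem_setOf_eq] at ha hb ⊢
    simp only [dec, List.map_cons, List.sum_cons, numVertices_node, ha, hb]
    omega

lemma S_finite (n : ℕ) : (S n).Finite := by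
  induction n using Nat.strong_induction_on with
  | _ n ih =>
    rcases Nat.eq_zero_or_pos n with rfl | hn
    · refine (Set.finite_singleton ([] : List PlaneTree)).subset ?_
      intro F hF
      match F with
      | [] => simp
      | T :: F' =>
        exfalso
        have := one_le_numVertices T
        simp only [S, Set.mem_setOf_eq, List.map_cons, List.sum_cons] at hF
        omega
    · rw [S_decomp hn]
      refine Set.Finite.biUnion (Finset.finite_toSet _) fun i hi => ?_
      simp only [Finset.coe_Icc, Set.mem_Icc] at hi
      exact ((ih (i - 1) (by omega)).prod (ih (n - i) (by omega))).image dec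

lemma S_pairwise (n : ℕ) :
    (↑(Finset.Icc 1 n) : Set ℕ).PairwiseDisjoint
      (fun i => dec '' (S (i - 1) ×ˢ S (n - i))) := by
  intro i hi j hj hij
  simp only [Finset.coe_Icc, Set.mem_Icc] at hi hj
  rw [Function.onFun, Set.disjoint_left]
  rintro F ⟨p, hp, rfl⟩ ⟨q, hq, hqF⟩
  have hpq : q = p := dec_inj hqF
  have h1 : (p.1.map numVertices).sum = i - 1 := hp.1
  have h2 : (q.1.map numVertices).sum = j - 1 := hq.1
  rw [hpq] at h2
  omega

lemma gp_eq {i : ℕ} (hi : 1 ≤ i) :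
    gp i = (Polynomial.C ((2 * i - 1 : ℕ) : ℚ) * Polynomial.X -
      Polynomial.C ((i - 1 : ℕ) : ℚ)) * Polynomial.C (1 / (i : ℚ)) := by
  have h1 : ((2 * i - 1 : ℤ) : ℚ) = ((2 * i - 1 : ℕ) : ℚ) := by
    push_cast [Nat.cast_sub (show 1 ≤ 2 * i by omega)]; ring
  have h2 : (1 - (i : ℚ)) = -(((i - 1 : ℕ) : ℚ)) := by
    push_cast [Nat.cast_sub hi]; ring
  rw [gp, h1, h2, map_neg]; ring

lemma piece_eq (n i : ℕ) (hi1 : 1 ≤ i) :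
    (∑ᶠ F ∈ dec '' (S (i - 1) ×ˢ S (n - i)), forestHookPoly F) =
      gp i * Hf (i - 1) * Hf (n - i) := by
  rw [finsum_mem_image dec_inj.injOn]
  have hcong : ∀ p ∈ S (i - 1) ×ˢ S (n - i),
      forestHookPoly (dec p) = gp i * forestHookPoly p.1 * forestHookPoly p.2 := by
    rintro ⟨a, b⟩ ⟨ha, hb⟩
    have hnv : numVertices (node a) = i := by
      rw [numVertices_node]
      have : (a.map numVertices).sum = i - 1 := ha
      omega
    rw [dec, forestHookPoly_cons, hnv]
  rw [finsum_mem_congr rfl hcong]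
  rw [finsum_mem_eq_finite_toFinset_sum _ ((S_finite (i - 1)).prod (S_finite (n - i)))]
  rw [← Set.Finite.toFinset_prod (S_finite (i - 1)) (S_finite (n - i))]
  rw [Finset.sum_product]
  rw [Hf_eq, Hf_eq, finsum_mem_eq_finite_toFinset_sum _ (S_finite (i - 1)),
    finsum_mem_eq_finite_toFinset_sum _ (S_finite (n - i)),
    mul_assoc, Finset.sum_mul_sum, Finset.mul_sum]
  refine Finset.sum_congr rfl fun a _ => ?_
  rw [Finset.mul_sum]
  refine Finset.sum_congr rfl fun b _ => ?_
  ring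

end HookRec

open HookRec in
/-- The recurrence `Hₙ(x) = Σ_{i=1}^n ((2i-1)x - (i-1))/i · H_{i-1}(x)·H_{n-i}(x)`. -/
theorem hook_length_poly_forests_recurrence (n : ℕ) (hn : 1 ≤ n) :
    Hf n = ∑ i ∈ Finset.Icc 1 n,
      (Polynomial.C ((2 * i - 1 : ℕ) : ℚ) * Polynomial.X - Polynomial.C ((i - 1 : ℕ) : ℚ)) *
        Polynomial.C (1 / (i : ℚ)) * Hf (i - 1) * Hf (n - i) := by
  rw [Hf_eq, S_decomp hn,
    finsum_mem_biUnion (S_pairwise n) (Finset.finite_toSet _)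
      (fun i _ => ((S_finite _).prod (S_finite _)).image dec),
    finsum_mem_coe_finset]
  refine Finset.sum_congr rfl fun i hi => ?_
  rw [Finset.mem_Icc] at hi
  rw [piece_eq n i hi.1, gp_eq hi.1]
end
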